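/- arXiv:2107.09107 — 2 statements merged into one kernel-verified Lean document; each statement's English description precedes it below -/
import Mathlib

section
/- For every fixed integer k ≥ 2, the normal order of N_k is k(k-1); precisely, (1/M) · #{a : 1 < a ≤ M and N_k(a) ≠ k(k-1)} → 0 as M → ∞. -/
/-!
For `a ≥ 3` the `k(k-1)` tuples with `a - 1` in one slot, `1` in another and `0` elsewhere are
distinct solutions of `multinomial m = a`, so `Nk k a ≠ k(k-1)` forces another solution `m`.
Such an `m` has two entries `≥ 2` or two entries equal to `1`, and either way `n = ∑ mᵢ` satisfies
`n(n-1) ≤ 2a`. Every entry `m_l` other than a largest one has `2 m_l ≤ n`, hence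
`2 ^ m_l ≤ n.choose m_l ≤ a`. So each exceptional `a ≤ M` other than `2` is the multinomial
coefficient of a tuple with one entry at most `√(2M) + 1` and all others at most `log₂ M`, and
there are only `O(√M (log M)^k) = o(M)` of those.
-/

/-- `Nk k a` is the number of `k`-tuples `(m₁, …, m_k)` of nonnegative integers whose
multinomial coefficient `(m₁ + ⋯ + m_k)! / (m₁! ⋯ m_k!)` equals `a`. -/
noncomputable def Nk (k : ℕ) (a : ℕ) : ℕ :=
  {m : Fin k → ℕ | Nat.multinomial Finset.univ m = a}.ncard

open Finset Filter Asymptotics Real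

namespace Nat

variable {α : Type*} [DecidableEq α]

theorem multinomial_eq_choose_mul_multinomial_erase {s : Finset α} {i : α} (f : α → ℕ)
    (hi : i ∈ s) :
    multinomial s f = (∑ j ∈ s, f j).choose (f i) * multinomial (s.erase i) f := by
  conv_lhs => rw [← insert_erase hi]
  rw [multinomial_insert (notMem_erase i s), ← sum_insert (notMem_erase i s), insert_erase hi]

theorem choose_le_multinomial {s : Finset α} {i : α} (f : α → ℕ) (hi : i ∈ s) :
    (∑ j ∈ s, f j).choose (f i) ≤ multinomial s f := by
  rw [multinomial_eq_choose_mul_multinomial_erase f hi]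
  exact Nat.le_mul_of_pos_right _ (multinomial_pos _ _)

theorem mul_sub_one_le_multinomial {s : Finset α} {i j : α} {f : α → ℕ} (hi : i ∈ s)
    (hj : j ∈ s) (hij : i ≠ j) (hfi : f i = 1) (hfj : f j = 1) :
    (∑ l ∈ s, f l) * (∑ l ∈ s, f l - 1) ≤ multinomial s f := by
  have hsum : ∑ l ∈ s.erase i, f l = ∑ l ∈ s, f l - 1 := by
    rw [← add_sum_erase s f hi, hfi]; omega
  have hrest := choose_le_multinomial f (mem_erase.2 ⟨hij.symm, hj⟩)
  rw [multinomial_eq_choose_mul_multinomial_erase f hi, hfi, choose_one_right]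
  rw [hsum, hfj, choose_one_right] at hrest
  exact Nat.mul_le_mul_left _ hrest

theorem choose_le_choose_of_le_of_two_mul_le {n a b : ℕ} (hab : a ≤ b) (hb : 2 * b ≤ n) :
    n.choose a ≤ n.choose b := by
  induction b, hab using Nat.le_induction with
  | base => rfl
  | succ c _ ih => exact (ih (by omega)).trans (choose_le_succ_of_lt_half_left (by omega))

theorem choose_two_le_choose {n r : ℕ} (h2 : 2 ≤ r) (hr : r + 2 ≤ n) :
    n.choose 2 ≤ n.choose r := by
  rcases le_total (2 * r) n with h | h
  · exact choose_le_choose_of_le_of_two_mul_le h2 h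
  · rw [← choose_symm (by omega : r ≤ n)]
    exact choose_le_choose_of_le_of_two_mul_le (by omega) (by omega)

theorem two_pow_le_centralBinom (t : ℕ) : 2 ^ t ≤ centralBinom t := by
  induction t with
  | zero => simp
  | succ t ih =>
    refine Nat.le_of_mul_le_mul_left ?_ t.succ_pos
    rw [succ_mul_centralBinom_succ]
    calc (t + 1) * 2 ^ (t + 1) = 2 * (t + 1) * 2 ^ t := by ring
      _ ≤ 2 * (2 * t + 1) * centralBinom t := by gcongr; omega

theorem two_pow_le_choose {n t : ℕ} (h : 2 * t ≤ n) : 2 ^ t ≤ n.choose t :=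
  (two_pow_le_centralBinom t).trans (centralBinom_eq_two_mul_choose t ▸ choose_le_choose t h)

end Nat

theorem nonempty_of_multinomial_ne_one {α : Type*} [Fintype α] {m : α → ℕ}
    (hone : Nat.multinomial univ m ≠ 1) : Nonempty α := by
  by_contra h
  exact hone (by simp [univ_eq_empty_iff.2 (not_nonempty_iff.1 h)])

section Tuples

variable {α : Type*} [DecidableEq α]

def standardTuple (a : ℕ) (i j : α) : α → ℕ :=
  fun l => if l = i then a - 1 else if l = j then 1 else 0

theorem multinomial_eq_choose_of_eq_zero [Fintype α] {m : α → ℕ} {i j : α} (hij : i ≠ j)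
    (h : ∀ l, l ≠ i → l ≠ j → m l = 0) :
    Nat.multinomial univ m = (m i + m j).choose (m i) := by
  rw [← Nat.binomial_eq_choose hij]
  exact (Nat.multinomial_congr_of_sdiff (subset_univ _)
    (fun l hl => h l (by simp_all) (by simp_all)) (fun _ _ => rfl)).symm

theorem multinomial_eq_one_of_eq_zero [Fintype α] {m : α → ℕ} {i : α} (h : ∀ l, l ≠ i → m l = 0) :
    Nat.multinomial univ m = 1 := by
  rw [← Nat.multinomial_singleton i m]
  exact (Nat.multinomial_congr_of_sdiff (subset_univ _)
    (fun l hl => h l (by simp_all)) (fun _ _ => rfl)).symm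

theorem multinomial_standardTuple [Fintype α] {a : ℕ} (ha : 1 ≤ a) {i j : α} (hij : i ≠ j) :
    Nat.multinomial univ (standardTuple a i j) = a := by
  rw [multinomial_eq_choose_of_eq_zero hij (fun l hli hlj => by simp [standardTuple, hli, hlj])]
  simp [standardTuple, hij.symm]
  omega

theorem standardTuple_injOn {a : ℕ} (ha : 3 ≤ a) :
    Set.InjOn (fun p : α × α => standardTuple a p.1 p.2) {p | p.1 ≠ p.2} := by
  rintro ⟨i, j⟩ (hij : i ≠ j) ⟨i', j'⟩ (hij' : i' ≠ j') h
  have hi := congrFun h i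
  have hj := congrFun h j
  simp only [standardTuple] at hi hj
  simp only [Prod.mk.injEq]
  split_ifs at hi hj <;> grind

theorem add_le_sum_of_ne [Fintype α] (m : α → ℕ) {i j : α} (hij : i ≠ j) :
    m i + m j ≤ ∑ l, m l :=
  (sum_pair hij).symm.le.trans (sum_le_sum_of_subset (subset_univ _))

theorem sum_mul_sum_sub_one_le_two_mul_multinomial [Fintype α] {m : α → ℕ}
    (hone : Nat.multinomial univ m ≠ 1)
    (hstd : ∀ i j, i ≠ j → m ≠ standardTuple (Nat.multinomial univ m) i j) :
    (∑ l, m l) * (∑ l, m l - 1) ≤ 2 * Nat.multinomial univ m := by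
  have := nonempty_of_multinomial_ne_one hone
  obtain ⟨i, -, hmax⟩ := exists_max_image univ m univ_nonempty
  by_cases hbig : ∃ j, j ≠ i ∧ 2 ≤ m j
  · obtain ⟨j, hji, hj⟩ := hbig
    have hsum := add_le_sum_of_ne m hji.symm
    have hchoose :=
      Nat.choose_two_le_choose (n := ∑ l, m l) (hj.trans (hmax j (mem_univ j))) (by omega)
    have hmult := Nat.choose_le_multinomial m (mem_univ i)
    have htwo := Nat.div_two_mul_two_of_even (Nat.even_mul_pred_self (∑ l, m l))
    rw [← Nat.choose_two_right] at htwo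
    omega
  by_cases hones : ∃ j l, j ≠ l ∧ m j = 1 ∧ m l = 1
  · obtain ⟨j, l, hjl, hj, hl⟩ := hones
    have := Nat.mul_sub_one_le_multinomial (mem_univ j) (mem_univ l) hjl hj hl
    omega
  push Not at hbig hones
  exfalso
  by_cases hj : ∃ j, j ≠ i ∧ m j = 1
  · obtain ⟨j, hji, hj⟩ := hj
    have hzero : ∀ l, l ≠ i → l ≠ j → m l = 0 := fun l hli hlj => by
      have := hbig l hli
      have := hones j l (Ne.symm hlj) hj
      omega
    refine hstd i j hji.symm ?_
    funext l
    rw [multinomial_eq_choose_of_eq_zero hji.symm hzero, hj, Nat.choose_succ_self_right]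
    by_cases hli : l = i
    · simp [standardTuple, hli]
    by_cases hlj : l = j
    · simp [standardTuple, hlj, hji, hj]
    · simp [standardTuple, hli, hlj, hzero l hli hlj]
  · push Not at hj
    refine hone (multinomial_eq_one_of_eq_zero (i := i) fun l hli => ?_)
    have := hbig l hli
    have := hj l hli
    omega

theorem two_pow_le_multinomial [Fintype α] {m : α → ℕ} {i l : α} (hli : l ≠ i)
    (hmax : m l ≤ m i) : 2 ^ m l ≤ Nat.multinomial univ m :=
  (Nat.two_pow_le_choose (by have := add_le_sum_of_ne m hli; omega)).trans
    (Nat.choose_le_multinomial m (mem_univ l))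

end Tuples

theorem Nk_eq_of_forall_eq_standardTuple {k a : ℕ} (ha : 3 ≤ a)
    (h : ∀ m : Fin k → ℕ, Nat.multinomial univ m = a → ∃ i j, i ≠ j ∧ m = standardTuple a i j) :
    Nk k a = k * (k - 1) := by
  have hsols : {m : Fin k → ℕ | Nat.multinomial univ m = a} =
      (fun p : Fin k × Fin k => standardTuple a p.1 p.2) '' ↑(univ : Finset (Fin k)).offDiag := by
    ext m
    constructor
    · intro hm
      obtain ⟨i, j, hij, rfl⟩ := h m hm
      exact ⟨(i, j), by simpa using hij, rfl⟩
    · rintro ⟨⟨i, j⟩, hij, rfl⟩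
      exact multinomial_standardTuple (by omega) (by simpa using hij)
  rw [Nk, hsols, ((standardTuple_injOn ha).mono fun p hp => (mem_offDiag.1 hp).2.2).ncard_image,
    Set.ncard_coe_finset, offDiag_card, card_univ, Fintype.card_fin, Nat.mul_sub_one]

theorem exists_ne_standardTuple_of_Nk_ne {k a : ℕ} (ha : 3 ≤ a) (h : Nk k a ≠ k * (k - 1)) :
    ∃ m : Fin k → ℕ, Nat.multinomial univ m = a ∧ ∀ i j, i ≠ j → m ≠ standardTuple a i j := by
  by_contra hall
  push Not at hall
  exact h (Nk_eq_of_forall_eq_standardTuple ha hall)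

theorem multinomial_mem_image_update {k M : ℕ} {m : Fin k → ℕ}
    (hM : Nat.multinomial univ m ≤ M) (hone : Nat.multinomial univ m ≠ 1)
    (hstd : ∀ i j, i ≠ j → m ≠ standardTuple (Nat.multinomial univ m) i j) :
    Nat.multinomial univ m ∈
      (univ ×ˢ range (Nat.sqrt (2 * M) + 2) ×ˢ
        Fintype.piFinset fun _ => range (Nat.log 2 M + 1)).image
      fun p : Fin k × ℕ × (Fin k → ℕ) =>
        Nat.multinomial univ (Function.update p.2.2 p.1 p.2.1) := by
  have := nonempty_of_multinomial_ne_one hone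
  obtain ⟨i, -, hmax⟩ := exists_max_image univ m univ_nonempty
  refine mem_image.2 ⟨(i, m i, Function.update m i 0), ?_, by simp⟩
  simp only [mem_product, mem_univ, mem_range, Fintype.mem_piFinset, true_and]
  constructor
  · have hsum := sum_mul_sum_sub_one_le_two_mul_multinomial hone hstd
    have hi := single_le_sum (fun l _ => Nat.zero_le (m l)) (mem_univ i)
    have hsqrt : ∑ l, m l - 1 ≤ Nat.sqrt (2 * M) :=
      Nat.le_sqrt.2 ((Nat.mul_le_mul_right _ (Nat.sub_le _ 1)).trans (by omega))
    omega
  · intro l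
    rcases eq_or_ne l i with rfl | hli
    · simp
    · rw [Function.update_of_ne hli, Nat.lt_succ_iff]
      exact Nat.le_log_of_pow_le one_lt_two
        ((two_pow_le_multinomial hli (hmax l (mem_univ l))).trans hM)

theorem card_filter_Nk_ne_le (k M : ℕ) :
    #{a ∈ Ioc 1 M | Nk k a ≠ k * (k - 1)} ≤
      1 + k * (Nat.sqrt (2 * M) + 2) * (Nat.log 2 M + 1) ^ k := by
  set T : Finset (Fin k × ℕ × (Fin k → ℕ)) := univ ×ˢ range (Nat.sqrt (2 * M) + 2) ×ˢ
    Fintype.piFinset fun _ => range (Nat.log 2 M + 1)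
  have hsub : {a ∈ Ioc 1 M | Nk k a ≠ k * (k - 1)} ⊆
      insert 2 (T.image fun p => Nat.multinomial univ (Function.update p.2.2 p.1 p.2.1)) := by
    intro a ha
    simp only [mem_filter, mem_Ioc] at ha
    obtain ⟨⟨ha1, haM⟩, hNk⟩ := ha
    rcases eq_or_ne a 2 with rfl | ha2
    · exact mem_insert_self _ _
    obtain ⟨m, rfl, hstd⟩ := exists_ne_standardTuple_of_Nk_ne (by omega) hNk
    exact mem_insert_of_mem (multinomial_mem_image_update haM (by omega) hstd)
  calc _ ≤ _ := card_le_card hsub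
    _ ≤ 1 + #T := by
      rw [add_comm]
      exact (card_insert_le _ _).trans (Nat.add_le_add_right card_image_le 1)
    _ = _ := by simp [T, mul_assoc]

theorem isLittleO_sqrt_mul_logb_add_one_pow (k : ℕ) :
    (fun x : ℝ => √x * (logb 2 x + 1) ^ k) =o[atTop] id := by
  have hlogb : (fun x => logb 2 x + 1) =O[atTop] log :=
    (((isBigO_refl log atTop).const_mul_left (log 2)⁻¹).congr_left fun x => by
      rw [logb, div_eq_inv_mul]).add isLittleO_const_log_atTop.isBigO
  have hpow : (fun x => (logb 2 x + 1) ^ k) =o[atTop] fun x => x ^ (1 / 2 : ℝ) :=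
    (hlogb.pow k).trans_isLittleO <| by
      simpa only [rpow_natCast] using isLittleO_log_rpow_rpow_atTop (k : ℝ) one_half_pos
  refine ((isBigO_refl sqrt atTop).mul_isLittleO hpow).congr' (by simp) ?_
  filter_upwards [eventually_ge_atTop 0] with x hx
  rw [← sqrt_eq_rpow, mul_self_sqrt hx, id]

theorem isLittleO_card_filter_Nk_ne (k : ℕ) :
    (fun M : ℕ => (#{a ∈ Ioc 1 M | Nk k a ≠ k * (k - 1)} : ℝ)) =o[atTop] fun M : ℕ => (M : ℝ) := by
  have hmain := ((isLittleO_sqrt_mul_logb_add_one_pow k).const_mul_left (4 * k)).comp_tendsto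
    tendsto_natCast_atTop_atTop
  have hone := (isLittleO_const_id_atTop (1 : ℝ)).comp_tendsto tendsto_natCast_atTop_atTop
  refine IsBigO.trans_isLittleO ?_ (hone.add hmain)
  refine IsBigO.of_bound 1 ?_
  filter_upwards [eventually_ge_atTop 1] with M hM
  have hM' : (1 : ℝ) ≤ M := by exact_mod_cast hM
  have hsqrt : (Nat.sqrt (2 * M) : ℝ) + 2 ≤ 4 * √M := by
    have h1 : (Nat.sqrt (2 * M) : ℝ) ≤ √2 * √M := by
      rw [← sqrt_mul zero_le_two]; exact_mod_cast Real.nat_sqrt_le_real_sqrt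
    have h2 : √2 ≤ 2 := by rw [sqrt_le_left zero_le_two]; norm_num
    have h3 : 1 ≤ √M := one_le_sqrt.2 hM'
    nlinarith [sqrt_nonneg (M : ℝ)]
  have hlog : (Nat.log 2 M : ℝ) ≤ logb 2 M := by exact_mod_cast Real.natLog_le_logb M 2
  have hlogb : 0 ≤ logb 2 M := logb_nonneg one_lt_two hM'
  simp only [Function.comp_apply, one_mul]
  rw [Real.norm_of_nonneg (by positivity), Real.norm_of_nonneg (by positivity)]
  calc (#{a ∈ Ioc 1 M | Nk k a ≠ k * (k - 1)} : ℝ)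
      ≤ 1 + k * ((Nat.sqrt (2 * M) : ℝ) + 2) * ((Nat.log 2 M : ℝ) + 1) ^ k := by
        exact_mod_cast card_filter_Nk_ne_le k M
    _ ≤ 1 + k * (4 * √M) * (logb 2 M + 1) ^ k := by gcongr
    _ = _ := by ring

theorem normal_order_Nk_general (k : ℕ) :
    Filter.Tendsto
      (fun M : ℕ => (((Finset.Ioc 1 M).filter (fun a => Nk k a ≠ k * (k - 1))).card : ℝ) / M)
      Filter.atTop (nhds 0) :=
  (isLittleO_card_filter_Nk_ne k).tendsto_div_nhds_zero

theorem normal_order_Nk (k : ℕ) (hk : 2 ≤ k) :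
    Filter.Tendsto
      (fun M : ℕ => (((Finset.Ioc 1 M).filter (fun a => Nk k a ≠ k * (k - 1))).card : ℝ) / M)
      Filter.atTop (nhds 0) :=
  normal_order_Nk_general k
end

section
/- For every fixed integer k ≥ 2 there is a constant C > 0 such that N_k(a) ≤ C · (log a)^{k-1} for all integers a ≥ 3. -/
/-!
If the multinomial coefficient of `m` is `a`, then for any two positions `i ≠ j` with
`m i ≤ m j` it is at least `C(2 m_i, m_i) ≥ 2 ^ m_i`, so every entry other than a largest one is
at most `log₂ a`. For `a ≠ 1` some such entry is positive, and then the coefficient is strictly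
increasing in the largest entry, so the tuple is determined by the position of a largest entry
together with the remaining entries. Hence `N_k(a) ≤ k (log₂ a + 1) ^ (k - 1)`.
-/

open Finset

namespace Nat

theorem two_pow_le_centralBinom_s7 (n : ℕ) : 2 ^ n ≤ n.centralBinom := by
  induction n with
  | zero => simp
  | succ n ih =>
    refine Nat.le_of_mul_le_mul_left ?_ n.succ_pos
    rw [succ_mul_centralBinom_succ, pow_succ]
    nlinarith

theorem add_choose_strictMono {r : ℕ} (hr : 0 < r) : StrictMono fun t => (t + r).choose r := by
  refine strictMono_nat_of_lt_succ fun t => ?_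
  obtain ⟨r, rfl⟩ := Nat.exists_eq_add_one_of_ne_zero hr.ne'
  rw [show t + 1 + (r + 1) = t + (r + 1) + 1 by ring, choose_succ_succ]
  exact Nat.lt_add_of_pos_left (choose_pos (by omega))

variable {α : Type*} {s : Finset α} {f g : α → ℕ} {i j : α}

theorem multinomial_eq_choose_mul_erase [DecidableEq α] (hj : j ∈ s) (f : α → ℕ) :
    multinomial s f = (f j + ∑ x ∈ s.erase j, f x).choose (f j) * multinomial (s.erase j) f := by
  rw [← multinomial_insert (notMem_erase j s), insert_erase hj]

theorem choose_sum_le_multinomial (hi : i ∈ s) (f : α → ℕ) :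
    (∑ x ∈ s, f x).choose (f i) ≤ multinomial s f := by
  classical
  rw [multinomial_eq_choose_mul_erase hi, ← add_sum_erase s f hi]
  exact Nat.le_mul_of_pos_right _ (multinomial_pos _ _)

theorem two_pow_le_multinomial (hi : i ∈ s) (hj : j ∈ s) (hij : i ≠ j) (hle : f i ≤ f j) :
    2 ^ f i ≤ multinomial s f := by
  classical
  have hpair : f i + f j ≤ ∑ x ∈ s, f x := by
    rw [← sum_pair hij]
    exact sum_le_sum_of_subset (insert_subset hi (singleton_subset_iff.mpr hj))
  calc 2 ^ f i ≤ (f i).centralBinom := two_pow_le_centralBinom_s7 _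
    _ = (2 * f i).choose (f i) := centralBinom_eq_two_mul_choose _
    _ ≤ (∑ x ∈ s, f x).choose (f i) := choose_le_choose _ (by omega)
    _ ≤ multinomial s f := choose_sum_le_multinomial hi f

theorem eq_of_multinomial_eq (hj : j ∈ s) (hfg : ∀ x ∈ s, x ≠ j → f x = g x)
    (h : multinomial s f = multinomial s g) (h1 : multinomial s f ≠ 1) : f j = g j := by
  classical
  have hrest : multinomial (s.erase j) f = multinomial (s.erase j) g :=
    multinomial_congr fun x hx => hfg x (mem_of_mem_erase hx) (ne_of_mem_erase hx)
  have hsum : ∑ x ∈ s.erase j, f x = ∑ x ∈ s.erase j, g x :=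
    sum_congr rfl fun x hx => hfg x (mem_of_mem_erase hx) (ne_of_mem_erase hx)
  rw [multinomial_eq_choose_mul_erase hj, multinomial_eq_choose_mul_erase hj g, ← hrest, ← hsum,
    choose_symm_add, choose_symm_add] at h
  rcases Nat.eq_zero_or_pos (∑ x ∈ s.erase j, f x) with hr | hr
  · have hzero : ∀ x ∈ s.erase j, f x = 0 := sum_eq_zero_iff.mp hr
    refine absurd ?_ h1
    rw [multinomial_eq_choose_mul_erase hj, hr, add_zero, choose_self, one_mul,
      multinomial_congr (g := 0) hzero]
    simp [multinomial]
  · exact (add_choose_strictMono hr).injective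
      (Nat.eq_of_mul_eq_mul_right (multinomial_pos _ _) h)

end Nat

theorem ncard_setOf_multinomial_eq_le {ι : Type*} [Fintype ι] {a : ℕ} (ha : a ≠ 1) :
    {m : ι → ℕ | Nat.multinomial univ m = a}.ncard
      ≤ Fintype.card ι * (Nat.log 2 a + 1) ^ (Fintype.card ι - 1) := by
  classical
  set S := {m : ι → ℕ | Nat.multinomial univ m = a}
  set L := Nat.log 2 a
  let peak (j : ι) : Set (ι → ℕ) := {m ∈ S | ∀ x, m x ≤ m j}
  have hcover : S = ⋃ j, peak j := by
    refine subset_antisymm (fun m hm => ?_) (Set.iUnion_subset fun j => Set.sep_subset _ _)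
    have : Nonempty ι := by
      by_contra hempty
      rw [not_nonempty_iff] at hempty
      exact ha (by simpa [S] using hm.symm)
    obtain ⟨j, hj⟩ := Finite.exists_max m
    exact Set.mem_iUnion.mpr ⟨j, hm, hj⟩
  have hpeak (j : ι) : (peak j).ncard ≤ (L + 1) ^ (Fintype.card ι - 1) := by
    let target := Fintype.piFinset fun _ : {x // x ≠ j} => range (L + 1)
    have hmaps : ∀ m ∈ peak j, (fun x : {x // x ≠ j} => m x) ∈ (target : Set _) := by
      rintro m ⟨hm, hmax⟩
      simp only [target, mem_coe, Fintype.mem_piFinset, mem_range]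
      intro x
      refine Nat.lt_succ_of_le (Nat.le_log_of_pow_le one_lt_two ?_)
      exact hm ▸ Nat.two_pow_le_multinomial (mem_univ _) (mem_univ j) x.2 (hmax x)
    have hinj : Set.InjOn (fun (m : ι → ℕ) (x : {x // x ≠ j}) => m x) (peak j) := by
      rintro m ⟨hm, -⟩ m' ⟨hm', -⟩ hmm'
      have hoff (x : ι) (hx : x ≠ j) : m x = m' x := congrFun hmm' ⟨x, hx⟩
      funext x
      by_cases hx : x = j
      · subst hx
        exact Nat.eq_of_multinomial_eq (mem_univ x) (fun y _ hy => hoff y hy)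
          (hm.trans hm'.symm) (hm ▸ ha)
      · exact hoff x hx
    calc (peak j).ncard ≤ (target : Set _).ncard := Set.ncard_le_ncard_of_injOn _ hmaps hinj
      _ = (L + 1) ^ (Fintype.card ι - 1) := by
        rw [Set.ncard_coe_finset, Fintype.card_piFinset]
        simp [Fintype.card_subtype_compl]
  calc S.ncard = (⋃ j, peak j).ncard := by rw [hcover]
    _ ≤ ∑ j, (peak j).ncard := Set.ncard_iUnion_le_of_fintype peak
    _ ≤ ∑ _j : ι, (L + 1) ^ (Fintype.card ι - 1) := sum_le_sum fun j _ => hpeak j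
    _ = Fintype.card ι * (L + 1) ^ (Fintype.card ι - 1) := by simp

theorem natLog_two_add_one_le_three_mul_log {a : ℕ} (ha : 3 ≤ a) :
    (Nat.log 2 a : ℝ) + 1 ≤ 3 * Real.log a := by
  have ha' : (3 : ℝ) ≤ a := by exact_mod_cast ha
  have hlog_ge_one : 1 ≤ Real.log a := by
    rw [Real.le_log_iff_exp_le (by linarith)]
    linarith [Real.exp_one_lt_d9]
  have hlogb : (Nat.log 2 a : ℝ) ≤ Real.log a / Real.log 2 := by
    simpa [Real.logb] using Real.natLog_le_logb a 2
  have hlog2 : 1 / 2 < Real.log 2 := by linarith [Real.log_two_gt_d9]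
  have : Real.log a / Real.log 2 ≤ 2 * Real.log a := by
    rw [div_le_iff₀ (by linarith)]; nlinarith
  linarith

theorem Nk_log_bound_general (k : ℕ) :
    ∃ C : ℝ, 0 < C ∧ ∀ a : ℕ, 3 ≤ a → (Nk k a : ℝ) ≤ C * (Real.log a) ^ (k - 1) := by
  refine ⟨(k + 1) * 3 ^ (k - 1), by positivity, fun a ha => ?_⟩
  have hcount : Nk k a ≤ k * (Nat.log 2 a + 1) ^ (k - 1) := by
    simpa [Nk] using ncard_setOf_multinomial_eq_le (ι := Fin k) (by omega : a ≠ 1)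
  have hlog := natLog_two_add_one_le_three_mul_log ha
  calc (Nk k a : ℝ) ≤ k * ((Nat.log 2 a : ℝ) + 1) ^ (k - 1) := by exact_mod_cast hcount
    _ ≤ (k + 1) * (3 * Real.log a) ^ (k - 1) := by gcongr; linarith
    _ = (k + 1) * 3 ^ (k - 1) * Real.log a ^ (k - 1) := by rw [mul_pow, mul_assoc]

theorem Nk_log_bound (k : ℕ) (hk : 2 ≤ k) :
    ∃ C : ℝ, 0 < C ∧ ∀ a : ℕ, 3 ≤ a → (Nk k a : ℝ) ≤ C * (Real.log a) ^ (k - 1) :=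
  Nk_log_bound_general k
end
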